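/- Fix 𝔟 ∈ (0,1/2) and an integer N ≥ 2. For every finite signed Borel measure σ on ℝ with ∬ ln(1 + sin²(2π𝔟)/sinh²(τ_N(s−u))) d|σ|(s)d|σ|(u) < ∞, one has E_N^{(−)}[σ] ≥ 0. -/

import Mathlib

open MeasureTheory Filter
open scoped ENNReal

noncomputable section

/-- The double integral ∬ f(s−u) dμ(s)dν(u) against two signed measures, expanded through
their Jordan decompositions. -/
def jordanDbl (f : ℝ → ℝ) (μ ν : SignedMeasure ℝ) : ℝ :=
  (∫ q : ℝ × ℝ, f (q.1 - q.2)
      ∂(μ.toJordanDecomposition.posPart.prod ν.toJordanDecomposition.posPart))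
  - (∫ q : ℝ × ℝ, f (q.1 - q.2)
      ∂(μ.toJordanDecomposition.posPart.prod ν.toJordanDecomposition.negPart))
  - (∫ q : ℝ × ℝ, f (q.1 - q.2)
      ∂(μ.toJordanDecomposition.negPart.prod ν.toJordanDecomposition.posPart))
  + (∫ q : ℝ × ℝ, f (q.1 - q.2)
      ∂(μ.toJordanDecomposition.negPart.prod ν.toJordanDecomposition.negPart))

/-- ln(1 + sin²(2π𝔟)/sinh²(τ·x)). -/
def vln (b τ x : ℝ) : ℝ :=
  Real.log (1 + Real.sin (2 * Real.pi * b) ^ 2 / Real.sinh (τ * x) ^ 2)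

/-- The functional E_N^{(−)}[σ] on signed measures. -/
def ENminus (b : ℝ) (N : ℕ) (σ : SignedMeasure ℝ) : ℝ :=
  (1 / 4) * jordanDbl (fun x => vln b (Real.log N) x) σ σ

open Set Function
open scoped NNReal

/-!
For `x ≠ 0` put `r = e^{-2|y|}` with `y = τx`. Then
`1 + sin²θ / sinh²y = |1 - r e^{2iθ}|² / (1 - r)²`, and the series of `-log (1 - z)` gives
`ln (1 + sin²θ / sinh²y) = ∑ₙ 2 (1 - cos 2nθ) / n · e^{-2nτ|x|}`, with nonnegative coefficients.
Each kernel `e^{-κ|s-u|}` (`κ > 0`) is positive definite, since it equals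
`2κ ∫ h(t-s) h(t-u) dt` for the one-sided exponential `h = 1_{[0,∞)} e^{-κ·}`.
For the Jordan decomposition `σ = P - Q` this bounds the cross energies `E(P,Q) + E(Q,P)` by
`E(P,P) + E(Q,Q)`. Everything is done in `ℝ≥0∞`, where no cancellation occurs; the integrability
hypothesis makes the diagonal null and all four energies finite, so the inequality passes to the
real energies.
-/

theorem hasSum_pow_mul_cos_div (φ : ℝ) {r : ℝ} (hr : |r| < 1) :
    HasSum (fun n : ℕ => r ^ n * Real.cos (n * φ) / n)
      (-Real.log (1 - 2 * r * Real.cos φ + r ^ 2) / 2) := by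
  set z : ℂ := r * Complex.exp (φ * Complex.I)
  have hz : ‖z‖ < 1 := by simpa [z, Complex.norm_exp_ofReal_mul_I] using hr
  have hnormSq : Complex.normSq (1 - z) = 1 - 2 * r * Real.cos φ + r ^ 2 := by
    rw [Complex.normSq_apply]
    simp only [z, Complex.sub_re, Complex.sub_im, Complex.one_re, Complex.one_im,
      Complex.re_ofReal_mul, Complex.im_ofReal_mul, Complex.exp_ofReal_mul_I_re,
      Complex.exp_ofReal_mul_I_im]
    linear_combination r ^ 2 * Real.sin_sq_add_cos_sq φ
  convert Complex.hasSum_re (Complex.hasSum_taylorSeries_neg_log hz) using 1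
  · funext n
    rw [show z ^ n / n = ((r ^ n / n : ℝ) : ℂ) * Complex.exp ((n * φ : ℝ) * Complex.I) by
      simp only [z, mul_pow, ← Complex.exp_nat_mul]; push_cast; ring_nf,
      Complex.re_ofReal_mul, Complex.exp_ofReal_mul_I_re]
    ring
  · rw [Complex.neg_re, Complex.log_re, Complex.norm_def, hnormSq,
      Real.log_sqrt (by simpa [← hnormSq] using Complex.normSq_nonneg (1 - z))]
    ring

def logSinhCoeff (θ : ℝ) (n : ℕ) : ℝ := 2 * (1 - Real.cos (n * (2 * θ))) / n

lemma logSinhCoeff_nonneg (θ : ℝ) (n : ℕ) : 0 ≤ logSinhCoeff θ n :=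
  div_nonneg (by linarith [Real.cos_le_one (n * (2 * θ))]) n.cast_nonneg

theorem one_add_sin_sq_div_sinh_sq (θ : ℝ) {y : ℝ} (hy : y ≠ 0) :
    1 + Real.sin θ ^ 2 / Real.sinh y ^ 2
      = (1 - 2 * Real.exp (-(2 * |y|)) * Real.cos (2 * θ) + Real.exp (-(2 * |y|)) ^ 2)
        / (1 - Real.exp (-(2 * |y|))) ^ 2 := by
  have hE : 1 < Real.exp |y| := Real.one_lt_exp_iff.mpr (abs_pos.mpr hy)
  have hE2 : Real.exp |y| ^ 2 - 1 ≠ 0 := by nlinarith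
  rw [← sq_abs (Real.sinh y), Real.abs_sinh, Real.sinh_eq, Real.exp_neg, Real.cos_two_mul,
    show -(2 * |y|) = -|y| + -|y| by ring, Real.exp_add, Real.exp_neg]
  field_simp
  linear_combination (4 * Real.exp |y| ^ 2) * Real.sin_sq_add_cos_sq θ

theorem hasSum_logSinhCoeff_mul_exp (θ : ℝ) {y : ℝ} (hy : y ≠ 0) :
    HasSum (fun n : ℕ => logSinhCoeff θ n * Real.exp (-(2 * n * |y|)))
      (Real.log (1 + Real.sin θ ^ 2 / Real.sinh y ^ 2)) := by
  set r := Real.exp (-(2 * |y|))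
  have hr : |r| < 1 := by
    rw [abs_of_pos (Real.exp_pos _), Real.exp_lt_one_iff]
    simpa using abs_pos.mpr hy
  have hr1 : 0 < 1 - r := by linarith [le_abs_self r]
  have hone := hasSum_pow_mul_cos_div 0 hr
  simp only [mul_zero, Real.cos_zero, mul_one, show 1 - 2 * r + r ^ 2 = (1 - r) ^ 2 by ring,
    Real.log_pow, Nat.cast_ofNat] at hone
  have hsum : HasSum (fun n : ℕ => 2 * (r ^ n / n) - 2 * (r ^ n * Real.cos (n * (2 * θ)) / n))
      (2 * (-(2 * Real.log (1 - r)) / 2)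
        - 2 * (-Real.log (1 - 2 * r * Real.cos (2 * θ) + r ^ 2) / 2)) :=
    (hone.mul_left 2).sub ((hasSum_pow_mul_cos_div (2 * θ) hr).mul_left 2)
  convert hsum using 1
  · funext n
    rw [show Real.exp (-(2 * n * |y|)) = r ^ n by rw [← Real.exp_nat_mul]; ring_nf, logSinhCoeff]
    ring
  · have hnum : 0 < 1 - 2 * r * Real.cos (2 * θ) + r ^ 2 := by
      nlinarith [Real.cos_le_one (2 * θ), Real.exp_pos (-(2 * |y|))]
    rw [one_add_sin_sq_div_sinh_sq θ hy, Real.log_div hnum.ne' (by positivity),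
      Real.log_pow]
    push_cast
    ring

lemma ENNReal.mul_add_mul_le_mul_self_add_mul_self (a b : ℝ≥0∞) :
    a * b + b * a ≤ a * a + b * b := by
  rcases eq_or_ne a ⊤ with rfl | ha
  · simp
  rcases eq_or_ne b ⊤ with rfl | hb
  · simp
  lift a to ℝ≥0 using ha
  lift b to ℝ≥0 using hb
  have := two_mul_le_add_sq a b
  rw [sq, sq, mul_assoc, two_mul, mul_comm a b] at this
  exact_mod_cast (mul_comm b a ▸ this : a * b + b * a ≤ a * a + b * b)

theorem lintegral_prod_lintegral_mul {α β : Type*} [MeasurableSpace α] [MeasurableSpace β]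
    {ρ : Measure β} [SFinite ρ] {g : β → α → ℝ≥0∞} (hg : Measurable (uncurry g))
    (μ ν : Measure α) [SFinite μ] [SFinite ν] :
    ∫⁻ q, ∫⁻ t, g t q.1 * g t q.2 ∂ρ ∂μ.prod ν
      = ∫⁻ t, (∫⁻ x, g t x ∂μ) * ∫⁻ y, g t y ∂ν ∂ρ := by
  rw [lintegral_lintegral_swap]
  · congr 1 with t
    exact lintegral_prod_mul (hg.comp measurable_prodMk_left).aemeasurable
      (hg.comp measurable_prodMk_left).aemeasurable
  · exact ((hg.comp (measurable_snd.prodMk (measurable_fst.comp measurable_fst))).mul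
      (hg.comp (measurable_snd.prodMk (measurable_snd.comp measurable_fst)))).aemeasurable

theorem lintegral_prod_lintegral_mul_cross_le {α β : Type*} [MeasurableSpace α]
    [MeasurableSpace β] {ρ : Measure β} [SFinite ρ] {g : β → α → ℝ≥0∞}
    (hg : Measurable (uncurry g)) (μ ν : Measure α) [SFinite μ] [SFinite ν] :
    ∫⁻ q, ∫⁻ t, g t q.1 * g t q.2 ∂ρ ∂μ.prod ν + ∫⁻ q, ∫⁻ t, g t q.1 * g t q.2 ∂ρ ∂ν.prod μ
      ≤ ∫⁻ q, ∫⁻ t, g t q.1 * g t q.2 ∂ρ ∂μ.prod μ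
        + ∫⁻ q, ∫⁻ t, g t q.1 * g t q.2 ∂ρ ∂ν.prod ν := by
  have hμ : Measurable fun t => ∫⁻ x, g t x ∂μ := hg.lintegral_prod_right'
  have hν : Measurable fun t => ∫⁻ x, g t x ∂ν := hg.lintegral_prod_right'
  simp only [lintegral_prod_lintegral_mul hg]
  rw [← lintegral_add_left (hμ.mul hν : Measurable fun t => _ * _),
    ← lintegral_add_left (hμ.mul hμ : Measurable fun t => _ * _)]
  exact lintegral_mono fun t => ENNReal.mul_add_mul_le_mul_self_add_mul_self _ _

def oneSidedExp (κ x : ℝ) : ℝ≥0∞ :=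
  (Ici 0).indicator (fun x => ENNReal.ofReal (Real.exp (-(κ * x)))) x

lemma measurable_oneSidedExp (κ : ℝ) : Measurable (oneSidedExp κ) :=
  (ENNReal.measurable_ofReal.comp (by fun_prop)).indicator measurableSet_Ici

theorem lintegral_oneSidedExp_mul {κ : ℝ} (hκ : 0 < κ) (s u : ℝ) :
    ∫⁻ t, oneSidedExp κ (t - s) * oneSidedExp κ (t - u)
      = ENNReal.ofReal (Real.exp (-(κ * |s - u|)) / (2 * κ)) := by
  set C := Real.exp (κ * (s + u))
  have hprod : (fun t => oneSidedExp κ (t - s) * oneSidedExp κ (t - u))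
      = (Ici (max s u)).indicator fun t => ENNReal.ofReal (C * Real.exp (-(2 * κ) * t)) := by
    funext t
    by_cases ht : max s u ≤ t
    · have hs : t - s ∈ Ici 0 := mem_Ici.mpr (sub_nonneg.mpr (le_of_max_le_left ht))
      have hu : t - u ∈ Ici 0 := mem_Ici.mpr (sub_nonneg.mpr (le_of_max_le_right ht))
      rw [indicator_of_mem (mem_Ici.mpr ht), oneSidedExp, oneSidedExp, indicator_of_mem hs,
        indicator_of_mem hu, ← ENNReal.ofReal_mul (Real.exp_pos _).le, ← Real.exp_add,
        ← Real.exp_add]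
      ring_nf
    · rw [indicator_of_notMem (mt mem_Ici.mp ht), oneSidedExp, oneSidedExp]
      rcases lt_max_iff.mp (not_le.mp ht) with h | h
      · rw [indicator_of_notMem (by simpa using h), zero_mul]
      · rw [indicator_of_notMem (by simpa using h : t - u ∉ Ici 0), mul_zero]
  have hint : IntegrableOn (fun t => C * Real.exp (-(2 * κ) * t)) (Ici (max s u)) :=
    Iff.mpr integrableOn_Ici_iff_integrableOn_Ioi
      ((exp_neg_integrableOn_Ioi _ (by positivity)).const_mul C)
  have hexp : C * Real.exp (-(2 * κ) * max s u) = Real.exp (-(κ * |s - u|)) := by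
    rw [← Real.exp_add]
    congr 1
    rcases le_total s u with h | h
    · rw [max_eq_right h, abs_of_nonpos (sub_nonpos.mpr h)]; ring
    · rw [max_eq_left h, abs_of_nonneg (sub_nonneg.mpr h)]; ring
  rw [hprod, lintegral_indicator measurableSet_Ici,
    ← ofReal_integral_eq_lintegral_ofReal hint (ae_of_all _ fun t => by positivity),
    integral_Ici_eq_integral_Ioi, integral_const_mul,
    integral_exp_mul_Ioi (by linarith), ← hexp]
  ring_nf

theorem lintegral_exp_neg_abs_sub_cross_le {κ : ℝ} (hκ : 0 < κ) (μ ν : Measure ℝ) [SFinite μ]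
    [SFinite ν] :
    ∫⁻ q, ENNReal.ofReal (Real.exp (-(κ * |q.1 - q.2|))) ∂μ.prod ν
        + ∫⁻ q, ENNReal.ofReal (Real.exp (-(κ * |q.1 - q.2|))) ∂ν.prod μ
      ≤ ∫⁻ q, ENNReal.ofReal (Real.exp (-(κ * |q.1 - q.2|))) ∂μ.prod μ
        + ∫⁻ q, ENNReal.ofReal (Real.exp (-(κ * |q.1 - q.2|))) ∂ν.prod ν := by
  have hk : ∀ q : ℝ × ℝ, ENNReal.ofReal (Real.exp (-(κ * |q.1 - q.2|)))
      = ENNReal.ofReal (2 * κ) * ∫⁻ t, oneSidedExp κ (t - q.1) * oneSidedExp κ (t - q.2) := by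
    intro q
    rw [lintegral_oneSidedExp_mul hκ, ← ENNReal.ofReal_mul (by positivity)]
    field_simp
  simp only [hk, lintegral_const_mul' _ _ ENNReal.ofReal_ne_top, ← mul_add]
  exact mul_le_mul_right (lintegral_prod_lintegral_mul_cross_le (ρ := volume)
    (g := fun t x => oneSidedExp κ (t - x))
    ((measurable_oneSidedExp κ).comp (measurable_fst.sub measurable_snd)) μ ν) _

lemma measurable_vln (b τ : ℝ) : Measurable (vln b τ) := by
  unfold vln
  fun_prop

lemma vln_nonneg (b τ x : ℝ) : 0 ≤ vln b τ x :=
  Real.log_nonneg (le_add_of_nonneg_right (by positivity))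

theorem ofReal_vln_eq_tsum (b : ℝ) {τ x : ℝ} (hτ : 0 < τ) (hx : x ≠ 0) :
    ENNReal.ofReal (vln b τ x) = ∑' n : ℕ, ENNReal.ofReal (logSinhCoeff (2 * Real.pi * b) n)
      * ENNReal.ofReal (Real.exp (-(2 * τ * n * |x|))) := by
  have hs := hasSum_logSinhCoeff_mul_exp (2 * Real.pi * b) (mul_ne_zero hτ.ne' hx)
  rw [vln, ← hs.tsum_eq, ENNReal.ofReal_tsum_of_nonneg
    (fun n => mul_nonneg (logSinhCoeff_nonneg _ n) (Real.exp_pos _).le) hs.summable]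
  congr 1 with n
  rw [← ENNReal.ofReal_mul (logSinhCoeff_nonneg _ n), abs_mul, abs_of_pos hτ]
  ring_nf

def vlnEnergy (b τ : ℝ) (μ ν : Measure ℝ) : ℝ≥0∞ :=
  ∫⁻ q, ENNReal.ofReal (vln b τ (q.1 - q.2)) ∂μ.prod ν

theorem vlnEnergy_eq_tsum (b : ℝ) {τ : ℝ} (hτ : 0 < τ) {μ ν : Measure ℝ}
    (h : ∀ᵐ q ∂μ.prod ν, q.1 - q.2 ≠ 0) :
    vlnEnergy b τ μ ν = ∑' n : ℕ, ENNReal.ofReal (logSinhCoeff (2 * Real.pi * b) n)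
      * ∫⁻ q, ENNReal.ofReal (Real.exp (-(2 * τ * n * |q.1 - q.2|))) ∂μ.prod ν := by
  rw [vlnEnergy, lintegral_congr_ae (h.mono fun q hq => ofReal_vln_eq_tsum b hτ hq),
    lintegral_tsum fun n => by fun_prop]
  congr 1 with n
  exact lintegral_const_mul' _ _ ENNReal.ofReal_ne_top

theorem vlnEnergy_cross_le (b : ℝ) {τ : ℝ} (hτ : 0 < τ) (P Q : Measure ℝ) [SFinite P] [SFinite Q]
    (h : ∀ᵐ q ∂(P + Q).prod (P + Q), q.1 - q.2 ≠ 0) :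
    vlnEnergy b τ P Q + vlnEnergy b τ Q P ≤ vlnEnergy b τ P P + vlnEnergy b τ Q Q := by
  simp only [Measure.prod_add, Measure.add_prod, ae_add_measure_iff] at h
  obtain ⟨⟨hPP, hQP⟩, hPQ, hQQ⟩ := h
  rw [vlnEnergy_eq_tsum b hτ hPQ, vlnEnergy_eq_tsum b hτ hQP, vlnEnergy_eq_tsum b hτ hPP,
    vlnEnergy_eq_tsum b hτ hQQ, ← ENNReal.tsum_add, ← ENNReal.tsum_add]
  refine ENNReal.tsum_le_tsum fun n => ?_
  rw [← mul_add, ← mul_add]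
  rcases n.eq_zero_or_pos with rfl | hn
  · simp [logSinhCoeff]
  · exact mul_le_mul_right (lintegral_exp_neg_abs_sub_cross_le (by positivity) P Q) _

theorem vlnEnergy_add_add (b τ : ℝ) (P Q : Measure ℝ) [SFinite P] [SFinite Q] :
    vlnEnergy b τ (P + Q) (P + Q)
      = vlnEnergy b τ P P + vlnEnergy b τ Q P + (vlnEnergy b τ P Q + vlnEnergy b τ Q Q) := by
  simp only [vlnEnergy, Measure.prod_add, Measure.add_prod, lintegral_add_measure]

theorem integral_vln_eq_toReal_vlnEnergy (b τ : ℝ) (μ ν : Measure ℝ) :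
    ∫ q, vln b τ (q.1 - q.2) ∂μ.prod ν = (vlnEnergy b τ μ ν).toReal :=
  integral_eq_lintegral_of_nonneg_ae (ae_of_all _ fun _ => vln_nonneg b τ _)
    ((measurable_vln b τ).comp (measurable_fst.sub measurable_snd)).aestronglyMeasurable

theorem ae_not_of_lintegral_ite_top_lt_top {α : Type*} [MeasurableSpace α] {μ : Measure α}
    {p : α → Prop} [DecidablePred p] (hp : MeasurableSet {x | p x}) {f : α → ℝ≥0∞}
    (hf : Measurable f) (h : ∫⁻ x, (if p x then ∞ else f x) ∂μ < ∞) : ∀ᵐ x ∂μ, ¬ p x := by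
  filter_upwards [ae_lt_top' (Measurable.ite hp measurable_const hf).aemeasurable h.ne]
    with x hx hpx
  simp [hpx] at hx

theorem statement9_general (b : ℝ) (N : ℕ) (hN : 2 ≤ N)
    (σ : SignedMeasure ℝ)
    (hint : ∫⁻ q : ℝ × ℝ,
        (if q.1 - q.2 = 0 then (⊤ : ℝ≥0∞)
          else ENNReal.ofReal (vln b (Real.log N) (q.1 - q.2)))
        ∂(σ.totalVariation.prod σ.totalVariation) < ⊤) :
    0 ≤ ENminus b N σ := by
  have hτ : 0 < Real.log N := Real.log_pos (by exact_mod_cast hN)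
  simp only [ENminus, jordanDbl, integral_vln_eq_toReal_vlnEnergy]
  set P := σ.toJordanDecomposition.posPart
  set Q := σ.toJordanDecomposition.negPart
  change ∫⁻ _, _ ∂(P + Q).prod (P + Q) < ⊤ at hint
  have hdiag : ∀ᵐ q ∂(P + Q).prod (P + Q), q.1 - q.2 ≠ 0 :=
    ae_not_of_lintegral_ite_top_lt_top
      (measurableSet_eq_fun (measurable_fst.sub measurable_snd) measurable_const)
      ((measurable_vln _ _).comp (measurable_fst.sub measurable_snd)).ennreal_ofReal hint
  have hfin : vlnEnergy b (Real.log N) (P + Q) (P + Q) ≠ ⊤ :=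
    ((lintegral_mono fun _ => by split_ifs <;> simp).trans_lt hint).ne
  simp only [vlnEnergy_add_add, ENNReal.add_ne_top] at hfin
  obtain ⟨⟨hPP, hQP⟩, hPQ, hQQ⟩ := hfin
  have hcross := ENNReal.toReal_mono (ENNReal.add_ne_top.mpr ⟨hPP, hQQ⟩)
    (vlnEnergy_cross_le b hτ P Q hdiag)
  rw [ENNReal.toReal_add hPQ hQP, ENNReal.toReal_add hPP hQQ] at hcross
  linarith

/-- E_N^{(−)}[σ] ≥ 0 for every finite signed Borel measure σ with
∬ ln(1 + sin²(2π𝔟)/sinh²(τ_N(s−u))) d|σ|(s)d|σ|(u) < ∞ (the integrand being +∞ on the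
diagonal). -/
theorem statement9 (b : ℝ) (hb1 : 0 < b) (hb2 : b < 1 / 2) (N : ℕ) (hN : 2 ≤ N)
    (σ : SignedMeasure ℝ)
    (hint : ∫⁻ q : ℝ × ℝ,
        (if q.1 - q.2 = 0 then (⊤ : ℝ≥0∞)
          else ENNReal.ofReal (vln b (Real.log N) (q.1 - q.2)))
        ∂(σ.totalVariation.prod σ.totalVariation) < ⊤) :
    0 ≤ ENminus b N σ :=
  statement9_general b N hN σ hint

end
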